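/- Let ẑ be a relative cycle of the pair K̂[b,d) (with class [ẑ] ∈ H(K̂[b,d))) such that ẑ contains a vertical cell τ×b with max τ = b (nonzero coefficient) and the boundary ∂ẑ contains a vertical cell σ×d with max σ = d. Then ẑ is an apex representative in H(K̂[b,d)), i.e., [ẑ] lies neither in the image of H(K̂[b+1,d)) → H(K̂[b,d)) nor in the image of H(K̂[b,d+1)) → H(K̂[b,d)). -/

import Mathlib

open Finsupp
open scoped Classical

/-- A finite Δ-complex over a field `F`: each cell has a dimension, a boundary chain,
and an integer support interval `T(σ) = [tmin σ, tmax σ] ⊆ [0, n]`; whenever `σ` appears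
in `∂τ` one has `tmin σ < tmin τ < tmax τ < tmax σ`. -/
structure DeltaComplex (F : Type) [Field F] (n : ℤ) where
  Cell : Type
  deq : DecidableEq Cell
  fin : Fintype Cell
  dim : Cell → ℕ
  tmin : Cell → ℤ
  tmax : Cell → ℤ
  bdry : Cell → (Cell →₀ F)
  tmin_nonneg : ∀ σ, 0 ≤ tmin σ
  tmin_lt_tmax : ∀ σ, tmin σ < tmax σ
  tmax_le : ∀ σ, tmax σ ≤ n
  bdry_dim : ∀ τ σ, bdry τ σ ≠ 0 → dim σ + 1 = dim τ
  nest : ∀ τ σ, bdry τ σ ≠ 0 → tmin σ < tmin τ ∧ tmax τ < tmax σ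
  bdry_bdry : ∀ τ, ((bdry τ).sum fun σ a => a • bdry σ) = 0

attribute [instance] DeltaComplex.deq DeltaComplex.fin

variable {F : Type} [Field F] {n : ℤ}

/-- The boundary of a chain of `K`. -/
noncomputable def bd (K : DeltaComplex F n) (c : K.Cell →₀ F) : K.Cell →₀ F :=
  c.sum fun τ a => a • K.bdry τ

/-- A chain is supported on a set of cells. -/
def SuppOn {α β : Type} [Zero β] (c : α →₀ β) (S : α → Prop) : Prop :=
  ∀ x, c x ≠ 0 → S x

/-- Cells of the prism `K̂`: vertical cells `σ×{i}` and horizontal cells `σ×[i,i+1]`. -/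
inductive PCell (C : Type) where
  | vert : C → ℤ → PCell C
  | horiz : C → ℤ → PCell C
deriving DecidableEq

/-- Membership of a prism cell in the prism `K̂`. -/
def inPrism (K : DeltaComplex F n) : PCell K.Cell → Prop
  | .vert σ i => K.tmin σ ≤ i ∧ i ≤ K.tmax σ
  | .horiz σ i => K.tmin σ ≤ i ∧ i + 1 ≤ K.tmax σ

/-- Membership of a prism cell in the interlevel subcomplex `K̂_i^j` (cells `σ×T` with
`T ⊆ [i,j]`). -/
def inSub (K : DeltaComplex F n) (i j : ℤ) : PCell K.Cell → Prop
  | .vert σ t => (K.tmin σ ≤ t ∧ t ≤ K.tmax σ) ∧ i ≤ t ∧ t ≤ j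
  | .horiz σ t => (K.tmin σ ≤ t ∧ t + 1 ≤ K.tmax σ) ∧ i ≤ t ∧ t + 1 ≤ j

/-- The boundary of a single prism cell: `∂(τ×i) = (∂τ)×i` and
`∂(σ×[i,i+1]) = σ×(i+1) − σ×i − (∂σ)×[i,i+1]`. -/
noncomputable def pcellBd (K : DeltaComplex F n) : PCell K.Cell → (PCell K.Cell →₀ F)
  | .vert τ i => (K.bdry τ).sum fun σ a => Finsupp.single (PCell.vert σ i) a
  | .horiz σ i =>
      Finsupp.single (PCell.vert σ (i + 1)) 1 - Finsupp.single (PCell.vert σ i) 1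
        - (K.bdry σ).sum fun ρ a => Finsupp.single (PCell.horiz ρ i) a

/-- The boundary of a prism chain. -/
noncomputable def pbd (K : DeltaComplex F n) (c : PCell K.Cell →₀ F) : PCell K.Cell →₀ F :=
  c.sum fun x a => a • pcellBd K x

/-- `z` is a relative cycle of the pair of subcomplexes `(A, B)` of the prism. -/
def RelCycle (K : DeltaComplex F n) (A B : PCell K.Cell → Prop)
    (z : PCell K.Cell →₀ F) : Prop :=
  SuppOn z A ∧ SuppOn (pbd K z) B

/-- The homology class `[z] ∈ H(A,B)` lies in the image of the map
`H(A',B') → H(A,B)` induced by the inclusion of pairs `(A',B') ⊆ (A,B)`: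
there is a relative cycle `α` of `(A',B')` homologous to `z` within `(A,B)`. -/
def InImg (K : DeltaComplex F n) (A' B' A B : PCell K.Cell → Prop)
    (z : PCell K.Cell →₀ F) : Prop :=
  ∃ α β γ : PCell K.Cell →₀ F,
    RelCycle K A' B' α ∧ SuppOn β A ∧ SuppOn γ B ∧ z = α + pbd K β + γ

/-- The vertical prism chain `w × t`. -/
noncomputable def vchain (K : DeltaComplex F n) (w : K.Cell →₀ F) (t : ℤ) :
    PCell K.Cell →₀ F :=
  w.sum fun σ a => Finsupp.single (PCell.vert σ t) a

/-- A valid choice of times for Lift-Cycle: for every simplex `τ` of `z` with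
`T(τ) ∩ [b,d] ≠ ∅`, the chosen time satisfies `t τ ∈ T(τ) ∩ [b,d]`. -/
def ValidTimes (K : DeltaComplex F n) (z : K.Cell →₀ F) (b d : ℤ) (t : K.Cell → ℤ) : Prop :=
  ∀ τ, z τ ≠ 0 → K.tmin τ ≤ d → b ≤ K.tmax τ →
    K.tmin τ ≤ t τ ∧ t τ ≤ K.tmax τ ∧ b ≤ t τ ∧ t τ ≤ d

/-- The chain `ẑ` produced by `Lift-Cycle(z, (s,f), w₀)` with the choice of times `t`
(here `b = min s f`, `d = max s f`): the sum of the vertical cells `⟨τ,z⟩·(τ×t_τ)` over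
simplices `τ` of `z` with `T(τ) ∩ [b,d] ≠ ∅`, plus horizontal cells `σ×[k,k+1]`
(oriented from `s` to `f`) whose coefficient is the running sum
`⟨σ,w₀⟩ + Σ ⟨τ,z⟩·⟨σ,∂τ⟩` over the cofaces `τ` whose time `t_τ` has already been passed
when traversing from `s` to `f`. -/
noncomputable def liftCycle (K : DeltaComplex F n) (z : K.Cell →₀ F) (s f : ℤ)
    (w0 : K.Cell →₀ F) (t : K.Cell → ℤ) : PCell K.Cell →₀ F :=
  (∑ τ ∈ z.support.filter (fun τ => K.tmin τ ≤ max s f ∧ min s f ≤ K.tmax τ),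
      Finsupp.single (PCell.vert τ (t τ)) (z τ))
  + ∑ σ : K.Cell, ∑ k ∈ Finset.Icc (min s f) (max s f - 1),
      Finsupp.single (PCell.horiz σ k)
        ((if s ≤ f then (1 : F) else -1) *
          (w0 σ +
            ∑ τ ∈ z.support.filter (fun τ =>
                (K.tmin τ ≤ max s f ∧ min s f ≤ K.tmax τ) ∧
                  (if s ≤ f then t τ ≤ k else k + 1 ≤ t τ)),
              z τ * (K.bdry τ) σ))

/-- Cells of the cone `K̄ = ω ∗ K`: base simplices, the cone vertex `ω`,
and cone simplices `σ̄ = ω ∗ σ`. -/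
inductive CCell (C : Type) where
  | base : C → CCell C
  | omega : CCell C
  | cone : C → CCell C
deriving DecidableEq

/-- Boundary of a single cell of the cone `K̄`:
`∂σ` for base simplices, `0` for `ω`, and `∂(ω∗σ) = σ − ω∗∂σ` (minus `ω` when `σ` is a
vertex) for cone simplices. -/
noncomputable def ccellBd (K : DeltaComplex F n) : CCell K.Cell → (CCell K.Cell →₀ F)
  | .base σ => (K.bdry σ).sum fun ρ a => Finsupp.single (CCell.base ρ) a
  | .omega => 0
  | .cone σ =>
      Finsupp.single (CCell.base σ) 1
        - (K.bdry σ).sum (fun ρ a => Finsupp.single (CCell.cone ρ) a)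
        - (if K.dim σ = 0 then Finsupp.single CCell.omega 1 else 0)

/-- The boundary of a chain of the cone `K̄`. -/
noncomputable def cbd (K : DeltaComplex F n) (c : CCell K.Cell →₀ F) : CCell K.Cell →₀ F :=
  c.sum fun x a => a • ccellBd K x

/-- The restriction `c ∩ K` of a cone chain to the base simplices, as a chain in `K`. -/
noncomputable def basePart (K : DeltaComplex F n) (c : CCell K.Cell →₀ F) : K.Cell →₀ F :=
  c.sum fun x a =>
    match x with
    | .base σ => Finsupp.single σ a
    | .omega => 0
    | .cone _ => 0

/-- The restriction `c ∩ (K̄ − K)` of a cone chain to the cells not in the base. -/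
noncomputable def conePart (K : DeltaComplex F n) (c : CCell K.Cell →₀ F) :
    CCell K.Cell →₀ F :=
  c.sum fun x a =>
    match x with
    | .base _ => 0
    | .omega => Finsupp.single CCell.omega a
    | .cone ρ => Finsupp.single (CCell.cone ρ) a

/-- The order of the cells of `K̄` in the cone filtration: base simplices by increasing
`min σ`, then `ω`, then cone simplices by decreasing `max σ`, ties broken consistently
so that every prefix is a subcomplex. -/
structure ConeOrder (K : DeltaComplex F n) where
  pos : CCell K.Cell → ℕ
  inj : Function.Injective pos
  base_lt_base : ∀ σ τ : K.Cell, K.tmin σ < K.tmin τ → pos (.base σ) < pos (.base τ)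
  base_lt_omega : ∀ σ : K.Cell, pos (.base σ) < pos .omega
  omega_lt_cone : ∀ σ : K.Cell, pos .omega < pos (.cone σ)
  cone_lt_cone : ∀ σ τ : K.Cell, K.tmax τ < K.tmax σ → pos (.cone σ) < pos (.cone τ)
  faces_first : ∀ x y, (ccellBd K x) y ≠ 0 → pos y < pos x

/-- `σ` is the pivot (lowest nonzero entry) of the column (chain) `c`. -/
def IsLow (K : DeltaComplex F n) (O : ConeOrder K) (c : CCell K.Cell →₀ F)
    (σ : CCell K.Cell) : Prop :=
  c σ ≠ 0 ∧ ∀ ρ, c ρ ≠ 0 → O.pos ρ ≤ O.pos σ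

/-- `R = DV` is a decomposition of the boundary matrix `D` of the cone filtration:
`V` is invertible upper-triangular and `R` is reduced (pivots of nonzero columns lie
in pairwise distinct rows). -/
structure IsReduction (K : DeltaComplex F n) (O : ConeOrder K)
    (R V : CCell K.Cell → (CCell K.Cell →₀ F)) : Prop where
  rdv : ∀ τ, R τ = cbd K (V τ)
  upper : ∀ τ ρ, (V τ) ρ ≠ 0 → O.pos ρ ≤ O.pos τ
  diag : ∀ τ, (V τ) τ ≠ 0
  reduced : ∀ τ τ' σ, τ ≠ τ' → IsLow K O (R τ) σ → ¬ IsLow K O (R τ') σ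

/-- One run of the lazy (standard left-to-right) reduction of the column of `τ`:
starting from a column `c` (with coefficient vector `v`), while the column is nonzero
and its pivot collides with the pivot of an earlier (already reduced) column, subtract
the appropriate scalar multiple of that column. -/
inductive LazyReduces (K : DeltaComplex F n) (O : ConeOrder K)
    (R V : CCell K.Cell → (CCell K.Cell →₀ F)) (τ : CCell K.Cell) :
    (CCell K.Cell →₀ F) → (CCell K.Cell →₀ F) →
      (CCell K.Cell →₀ F) → (CCell K.Cell →₀ F) → Prop
  | done (c v : CCell K.Cell →₀ F)
      (h : ∀ σ, IsLow K O c σ → ∀ τ', O.pos τ' < O.pos τ → ¬ IsLow K O (R τ') σ) :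
      LazyReduces K O R V τ c v c v
  | step (c v c' v' : CCell K.Cell →₀ F) (τ' σ : CCell K.Cell)
      (hlt : O.pos τ' < O.pos τ) (hc : IsLow K O c σ) (hr : IsLow K O (R τ') σ)
      (next : LazyReduces K O R V τ (c - (c σ / ((R τ') σ)) • R τ')
        (v - (c σ / ((R τ') σ)) • V τ') c' v') :
      LazyReduces K O R V τ c v c' v'

/-- `R = DV` is obtained by the lazy reduction: every column `R τ` (with coefficient
column `V τ`) is the result of the lazy reduction of the boundary column of `τ`,
columns being processed from left to right. -/
def IsLazyReduction (K : DeltaComplex F n) (O : ConeOrder K)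
    (R V : CCell K.Cell → (CCell K.Cell →₀ F)) : Prop :=
  ∀ τ, LazyReduces K O R V τ (ccellBd K τ) (Finsupp.single τ 1) (R τ) (V τ)

/-! The class of `ẑ` in `H(K̂[b,d))` has two coefficients that no homologous change can
alter: that of `τ × b`, because with `max τ = b` it is a face only of `τ × [b-1, b] ∉ K̂_b`,
and that of `σ × [d-1, d]`, because with `max σ = d` it is a face of no prism cell at all.
The first vanishes on the image of `H(K̂[b+1,d))`; the second equals the coefficient of
`σ × d` in the boundary, hence vanishes on the image of `H(K̂[b,d+1))`. -/

lemma SuppOn.apply_eq_zero {α β : Type} [Zero β] {c : α →₀ β} {S : α → Prop} (hc : SuppOn c S)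
    {x : α} (hx : ¬ S x) : c x = 0 :=
  not_not.mp fun h => hx (hc x h)

namespace PrismApex

variable {F : Type} [Field F] {n : ℤ} (K : DeltaComplex F n)

lemma inPrism_of_inSub {i j : ℤ} {x : PCell K.Cell} (h : inSub K i j x) : inPrism K x := by
  cases x <;> exact h.1

lemma pbd_apply (c : PCell K.Cell →₀ F) (y : PCell K.Cell) :
    pbd K c y = ∑ x ∈ c.support, c x * pcellBd K x y := by
  simp [pbd, Finsupp.sum, smul_eq_mul]

lemma sum_bdry_single_apply (τ ρ : K.Cell) {C : Type} (f : K.Cell → C) (hf : f.Injective) :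
    ((K.bdry τ).sum fun σ a => Finsupp.single (f σ) a) (f ρ) = K.bdry τ ρ := by
  simp only [Finsupp.sum_apply, Finsupp.single_apply, hf.eq_iff, Finsupp.sum_ite_eq']
  split_ifs with h
  · rfl
  · exact (Finsupp.notMem_support_iff.mp h).symm

lemma pcellBd_vert_apply_vert (τ ρ : K.Cell) (j i : ℤ) :
    pcellBd K (.vert τ j) (.vert ρ i) = if i = j then K.bdry τ ρ else 0 := by
  split_ifs with h
  · subst h
    exact sum_bdry_single_apply K τ ρ (PCell.vert · i) fun _ _ h => (PCell.vert.inj h).1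
  · simp [pcellBd, Finsupp.sum, Ne.symm h]

lemma pcellBd_vert_apply_horiz (τ ρ : K.Cell) (j i : ℤ) :
    pcellBd K (.vert τ j) (.horiz ρ i) = 0 := by
  simp [pcellBd, Finsupp.sum]

lemma pcellBd_horiz_apply_vert (τ ρ : K.Cell) (k i : ℤ) :
    pcellBd K (.horiz τ k) (.vert ρ i) =
      (if τ = ρ ∧ k + 1 = i then 1 else 0) - (if τ = ρ ∧ k = i then 1 else 0) := by
  simp [pcellBd, Finsupp.single_apply, Finsupp.sum]

lemma pcellBd_horiz_apply_horiz (τ ρ : K.Cell) (k i : ℤ) :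
    pcellBd K (.horiz τ k) (.horiz ρ i) = if i = k then -K.bdry τ ρ else 0 := by
  have h := sum_bdry_single_apply K τ ρ (PCell.horiz · i) fun _ _ h => (PCell.horiz.inj h).1
  split_ifs with hik
  · subst hik
    simp only [pcellBd, Finsupp.sub_apply, Finsupp.single_apply, reduceCtorEq, if_false, h]
    ring
  · simp [pcellBd, Finsupp.sum, Ne.symm hik]

variable {K}

lemma suppOn_inPrism {c : PCell K.Cell →₀ F} {i j : ℤ} (hc : SuppOn c (inSub K i j)) :
    SuppOn c (inPrism K) :=
  fun x hx => inPrism_of_inSub K (hc x hx)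

/-- A coface `ρ` of `σ` has `max ρ < max σ`, so `σ × [max σ - 1, max σ]` is the only prism
cell with `σ × max σ` in its boundary. -/
lemma pbd_apply_vert_tmax {c : PCell K.Cell →₀ F} (hc : SuppOn c (inPrism K)) (σ : K.Cell) :
    pbd K c (.vert σ (K.tmax σ)) = c (.horiz σ (K.tmax σ - 1)) := by
  rw [pbd_apply, Finset.sum_eq_single (PCell.horiz σ (K.tmax σ - 1))]
  · simp [pcellBd_horiz_apply_vert]
  · intro x hx hne
    have hcx := Finsupp.mem_support_iff.mp hx
    rcases x with ⟨ρ, j⟩ | ⟨ρ, k⟩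
    · rw [pcellBd_vert_apply_vert]
      split_ifs with h
      · subst h
        by_contra hne0
        have hρσ := (K.nest ρ σ (right_ne_zero_of_mul hne0)).2
        have hρ := (hc _ hcx).2
        omega
      · exact mul_zero _
    · have hk := (hc _ hcx).2
      rw [pcellBd_horiz_apply_vert, if_neg fun ⟨h1, h2⟩ => hne (by subst h1; congr 1; omega),
        if_neg fun ⟨h1, h2⟩ => by subst h1; omega, sub_zero, mul_zero]
  · intro h
    rw [Finsupp.notMem_support_iff.mp h, zero_mul]

lemma pbd_apply_horiz_tmax {c : PCell K.Cell →₀ F} (hc : SuppOn c (inPrism K)) (σ : K.Cell) :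
    pbd K c (.horiz σ (K.tmax σ - 1)) = 0 := by
  rw [pbd_apply]
  refine Finset.sum_eq_zero fun x hx => ?_
  have hcx := Finsupp.mem_support_iff.mp hx
  rcases x with ⟨ρ, j⟩ | ⟨ρ, k⟩
  · rw [pcellBd_vert_apply_horiz, mul_zero]
  · rw [pcellBd_horiz_apply_horiz]
    split_ifs with h
    · subst h
      by_contra hne0
      have hρσ := (K.nest ρ σ (neg_ne_zero.mp (right_ne_zero_of_mul hne0))).2
      have hρ := (hc _ hcx).2
      omega
    · exact mul_zero _

theorem not_inImg_succ_left {b d m : ℤ} (hbd : b < d) (B' : PCell K.Cell → Prop)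
    {z : PCell K.Cell →₀ F} {τ : K.Cell} (hτ : K.tmax τ = b) (hτz : z (.vert τ b) ≠ 0) :
    ¬ InImg K (inSub K (b + 1) m) B' (inSub K b m) (inSub K d m) z := by
  rintro ⟨α, β, γ, ⟨hα, -⟩, hβ, hγ, rfl⟩
  have hα0 : α (.vert τ b) = 0 := SuppOn.apply_eq_zero hα fun h => absurd h.2.1 (by omega)
  have hβ0 : pbd K β (.vert τ b) = 0 := by
    rw [← hτ, pbd_apply_vert_tmax (suppOn_inPrism hβ), hτ]
    exact SuppOn.apply_eq_zero hβ fun h => absurd h.2.1 (by omega)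
  have hγ0 : γ (.vert τ b) = 0 := SuppOn.apply_eq_zero hγ fun h => absurd h.2.1 (by omega)
  simp [hα0, hβ0, hγ0] at hτz

theorem not_inImg_succ_right {b d m : ℤ} {z : PCell K.Cell →₀ F} {σ : K.Cell}
    (hσ : K.tmax σ = d) (hσz : z (.horiz σ (d - 1)) ≠ 0) :
    ¬ InImg K (inSub K b m) (inSub K (d + 1) m) (inSub K b m) (inSub K d m) z := by
  rintro ⟨α, β, γ, ⟨hα, hαB⟩, hβ, hγ, rfl⟩
  subst hσ
  have hβ0 := pbd_apply_horiz_tmax (suppOn_inPrism hβ) σ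
  have hγ0 : γ (.horiz σ (K.tmax σ - 1)) = 0 :=
    SuppOn.apply_eq_zero hγ fun h => absurd h.2.1 (by omega)
  have hασ : pbd K α (.vert σ (K.tmax σ)) ≠ 0 := by
    rw [pbd_apply_vert_tmax (suppOn_inPrism hα)]
    simpa [hβ0, hγ0] using hσz
  exact absurd (hαB _ hασ).2.1 (by omega)

end PrismApex

open PrismApex in
/-- Theorem (open-closed apex representatives, `K̂[b,d)`): if a relative cycle `ẑ` of the
pair `K̂[b,d) = (K̂_b^{n+1}, K̂_d^{n+1})` contains a vertical cell `τ×b` with `max τ = b`, and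
its boundary contains a vertical cell `σ×d` with `max σ = d`, then `[ẑ]` is neither in the
image of `H(K̂[b+1,d)) → H(K̂[b,d))` nor in the image of `H(K̂[b,d+1)) → H(K̂[b,d))`. -/
theorem statement_1 {F : Type} [Field F] {n : ℤ} (K : DeltaComplex F n) (b d : ℤ)
    (z : PCell K.Cell →₀ F)
    (hz : RelCycle K (inSub K b (n + 1)) (inSub K d (n + 1)) z)
    (τ : K.Cell) (hτ : K.tmax τ = b) (hτz : z (PCell.vert τ b) ≠ 0)
    (σ : K.Cell) (hσ : K.tmax σ = d) (hσz : pbd K z (PCell.vert σ d) ≠ 0) :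
    ¬ InImg K (inSub K (b + 1) (n + 1)) (inSub K d (n + 1))
        (inSub K b (n + 1)) (inSub K d (n + 1)) z ∧
    ¬ InImg K (inSub K b (n + 1)) (inSub K (d + 1) (n + 1))
        (inSub K b (n + 1)) (inSub K d (n + 1)) z := by
  subst hσ
  have hσz' : z (.horiz σ (K.tmax σ - 1)) ≠ 0 := by
    rwa [← pbd_apply_vert_tmax (suppOn_inPrism hz.1)]
  have hbd : b < K.tmax σ := by
    have hb := (hz.1 _ hσz').2.1
    omega
  exact ⟨not_inImg_succ_left hbd _ hτ hτz, not_inImg_succ_right rfl hσz'⟩
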